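/- Let p* be n points in ℝ² (n ≥ 3) that are not all collinear, on the complete graph Kₙ. If v ∈ (ℝ²)ⁿ satisfies vᵢ = 0 and (p_a* − p_b*)ᵀ(v_a − v_b) = 0 for all pairs a ≠ b, then there exists a skew-symmetric 2×2 matrix Ω with vₖ = Ω(pₖ* − pᵢ*) for all k. That is, for a complete graph the set of infinitesimal flexes pinned at node i equals the rotational subspace R_i(p*). -/

import Mathlib

open Matrix

private lemma perp_aux12 (x0 x1 y0 y1 : ℝ) (h : x0 * y0 + x1 * y1 = 0) :
    (x0 = 0 ∧ x1 = 0) ∨ ((x0 ≠ 0 ∨ x1 ≠ 0) ∧ ∃ γ : ℝ, y0 = -γ * x1 ∧ y1 = γ * x0) := by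
  by_cases h0 : x0 = 0
  · by_cases h1 : x1 = 0
    · exact Or.inl ⟨h0, h1⟩
    · refine Or.inr ⟨Or.inr h1, -y0 / x1, ?_, ?_⟩
      · field_simp
      · have hy1 : y1 = 0 := by
          have : x1 * y1 = 0 := by rw [h0] at h; linarith
          exact (mul_eq_zero.mp this).resolve_left h1
        rw [hy1, h0]; ring
  · refine Or.inr ⟨Or.inl h0, y1 / x0, ?_, ?_⟩
    · field_simp; linear_combination h
    · field_simp

theorem stmt_12 (n : ℕ) (hn : 3 ≤ n) (p : Fin n → (Fin 2 → ℝ))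
    (hcol : ¬ Collinear ℝ (Set.range p)) (i : Fin n)
    (v : Fin n → (Fin 2 → ℝ)) (hpin : v i = 0)
    (hflex : ∀ a b : Fin n, a ≠ b → (p a - p b) ⬝ᵥ (v a - v b) = 0) :
    ∃ Ω : Matrix (Fin 2) (Fin 2) ℝ, Ωᵀ = -Ω ∧ ∀ k, v k = Ω.mulVec (p k - p i) := by
  classical
  -- step 1 : some point differs from p i
  have h1 : ∃ a, p a ≠ p i := by
    by_contra hc
    push_neg at hc
    exact hcol ((collinear_iff_of_mem (Set.mem_range_self i)).2
      ⟨0, by rintro _ ⟨k, rfl⟩; exact ⟨0, by simp [hc k]⟩⟩)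
  obtain ⟨a, ha⟩ := h1
  -- step 2 : some point not on the line through p i and p a
  have h2 : ∃ b, ¬ ∃ r : ℝ, p b - p i = r • (p a - p i) := by
    by_contra hc
    push_neg at hc
    refine hcol ((collinear_iff_of_mem (Set.mem_range_self i)).2 ⟨p a - p i, ?_⟩)
    rintro _ ⟨k, rfl⟩
    obtain ⟨r, hr⟩ := hc k
    exact ⟨r, by rw [← hr, vadd_eq_add]; abel⟩
  obtain ⟨b, hb⟩ := h2
  have hai : a ≠ i := by rintro rfl; exact ha rfl
  have hbi : b ≠ i := by
    rintro rfl
    exact hb ⟨0, by simp⟩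
  have hab : a ≠ b := by
    rintro rfl
    exact hb ⟨1, by simp⟩
  -- determinant nonzero
  have hdet : (p a 0 - p i 0) * (p b 1 - p i 1) - (p a 1 - p i 1) * (p b 0 - p i 0) ≠ 0 := by
    intro h
    have hu : p a 0 - p i 0 ≠ 0 ∨ p a 1 - p i 1 ≠ 0 := by
      by_contra hc
      push_neg at hc
      apply ha
      ext j; fin_cases j
      · have := hc.1; simpa [sub_eq_zero] using this
      · have := hc.2; simpa [sub_eq_zero] using this
    rcases hu with h0 | h1
    · refine hb ⟨(p b 0 - p i 0) / (p a 0 - p i 0), ?_⟩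
      ext j
      fin_cases j
      · simp only [Pi.sub_apply, Pi.smul_apply, smul_eq_mul, Fin.zero_eta, Fin.mk_one]
        field_simp
      · simp only [Pi.sub_apply, Pi.smul_apply, smul_eq_mul, Fin.zero_eta, Fin.mk_one]
        field_simp
        linear_combination h
    · refine hb ⟨(p b 1 - p i 1) / (p a 1 - p i 1), ?_⟩
      ext j
      fin_cases j
      · simp only [Pi.sub_apply, Pi.smul_apply, smul_eq_mul, Fin.zero_eta, Fin.mk_one]
        field_simp
        linear_combination -h
      · simp only [Pi.sub_apply, Pi.smul_apply, smul_eq_mul, Fin.zero_eta, Fin.mk_one]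
        field_simp
  -- scalar pin conditions
  have hC : ∀ k, k ≠ i →
      (p k 0 - p i 0) * v k 0 + (p k 1 - p i 1) * v k 1 = 0 := by
    intro k hk
    have h := hflex k i hk
    simp [dotProduct, Fin.sum_univ_two, hpin] at h
    linear_combination h
  have hE : ∀ s t, s ≠ t → s ≠ i → t ≠ i →
      (p s 0 - p i 0) * v t 0 + (p s 1 - p i 1) * v t 1
        + (p t 0 - p i 0) * v s 0 + (p t 1 - p i 1) * v s 1 = 0 := by
    intro s t hst hsi hti
    have h := hflex s t hst
    simp [dotProduct, Fin.sum_univ_two] at h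
    have h2 := hC s hsi
    have h3 := hC t hti
    linear_combination h2 + h3 - h
  -- rotational representation at a and b
  rcases perp_aux12 _ _ _ _ (hC a hai) with ⟨h0, h1⟩ | ⟨_, α, hα0, hα1⟩
  · exact absurd (by rw [h0, h1]; ring) hdet
  rcases perp_aux12 _ _ _ _ (hC b hbi) with ⟨h0, h1⟩ | ⟨_, β, hβ0, hβ1⟩
  · exact absurd (by rw [h0, h1]; ring) hdet
  have hEab := hE a b hab hai hbi
  rw [hα0, hα1, hβ0, hβ1] at hEab
  have hαβ : α = β := by
    have h2 : (α - β) * ((p a 0 - p i 0) * (p b 1 - p i 1)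
        - (p a 1 - p i 1) * (p b 0 - p i 0)) = 0 := by linear_combination hEab
    rcases mul_eq_zero.mp h2 with h | h
    · linarith [sub_eq_zero.mp h]
    · exact absurd h hdet
  subst hαβ
  refine ⟨!![0, -α; α, 0], ?_, ?_⟩
  · ext j l; fin_cases j <;> fin_cases l <;> simp
  intro k
  have hmv : ∀ x : Fin 2 → ℝ, (!![0, -α; α, 0]).mulVec x = ![-α * x 1, α * x 0] := by
    intro x
    ext j; fin_cases j <;> simp [Matrix.mulVec, dotProduct, Fin.sum_univ_two] <;> ring
  rw [hmv]
  by_cases hki : k = i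
  · subst hki
    ext j; fin_cases j <;> simp [hpin]
  by_cases hka : k = a
  · subst hka
    ext j; fin_cases j <;> simp [hα0, hα1]
  by_cases hkb : k = b
  · subst hkb
    ext j; fin_cases j <;> simp [hβ0, hβ1]
  rcases perp_aux12 _ _ _ _ (hC k hki) with ⟨h0, h1⟩ | ⟨hxne, γ, hγ0, hγ1⟩
  · -- p k = p i : v k = 0
    have hEak := hE a k (fun h => hka h.symm) hai hki
    have hEbk := hE b k (fun h => hkb h.symm) hbi hki
    rw [h0, h1] at hEak hEbk
    have hk0 : ((p a 0 - p i 0) * (p b 1 - p i 1)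
        - (p a 1 - p i 1) * (p b 0 - p i 0)) * v k 0 = 0 := by
      linear_combination (p b 1 - p i 1) * hEak - (p a 1 - p i 1) * hEbk
    have hk1 : ((p a 0 - p i 0) * (p b 1 - p i 1)
        - (p a 1 - p i 1) * (p b 0 - p i 0)) * v k 1 = 0 := by
      linear_combination (p a 0 - p i 0) * hEbk - (p b 0 - p i 0) * hEak
    have hv0 : v k 0 = 0 := (mul_eq_zero.mp hk0).resolve_left hdet
    have hv1 : v k 1 = 0 := (mul_eq_zero.mp hk1).resolve_left hdet
    ext j; fin_cases j <;> simp [hv0, hv1, h0, h1]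
  · have hEak := hE a k (fun h => hka h.symm) hai hki
    have hEbk := hE b k (fun h => hkb h.symm) hbi hki
    rw [hα0, hα1, hγ0, hγ1] at hEak
    rw [hβ0, hβ1, hγ0, hγ1] at hEbk
    have hu : (α - γ) * ((p a 0 - p i 0) * (p k 1 - p i 1)
        - (p a 1 - p i 1) * (p k 0 - p i 0)) = 0 := by linear_combination hEak
    have hw : (α - γ) * ((p b 0 - p i 0) * (p k 1 - p i 1)
        - (p b 1 - p i 1) * (p k 0 - p i 0)) = 0 := by linear_combination hEbk
    have hγα : γ = α := by
      by_cases hcux : (p a 0 - p i 0) * (p k 1 - p i 1)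
          - (p a 1 - p i 1) * (p k 0 - p i 0) = 0
      · have hcwx : (p b 0 - p i 0) * (p k 1 - p i 1)
            - (p b 1 - p i 1) * (p k 0 - p i 0) ≠ 0 := by
          intro hcwx
          have hx0 : ((p a 0 - p i 0) * (p b 1 - p i 1)
              - (p a 1 - p i 1) * (p b 0 - p i 0)) * (p k 0 - p i 0) = 0 := by
            linear_combination (p b 0 - p i 0) * hcux - (p a 0 - p i 0) * hcwx
          have hx1 : ((p a 0 - p i 0) * (p b 1 - p i 1)
              - (p a 1 - p i 1) * (p b 0 - p i 0)) * (p k 1 - p i 1) = 0 := by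
            linear_combination (p b 1 - p i 1) * hcux - (p a 1 - p i 1) * hcwx
          rcases hxne with h | h
          · exact h ((mul_eq_zero.mp hx0).resolve_left hdet)
          · exact h ((mul_eq_zero.mp hx1).resolve_left hdet)
        have := (mul_eq_zero.mp hw).resolve_right hcwx
        linarith [sub_eq_zero.mp this]
      · have := (mul_eq_zero.mp hu).resolve_right hcux
        linarith [sub_eq_zero.mp this]
    subst hγα
    ext j; fin_cases j <;> simp [hγ0, hγ1]
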